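/- Let $0 < s < 1$ and let $(W_j)_{j \ge -1}$ be nonnegative continuous functions on $[0,T]$ with $W_j(0) = 0$, and $(\varepsilon_j)_{j\ge -1}$ nondecreasing $C^1$ functions with $\varepsilon_j(0)=0$ and $\varepsilon_{j'} \le \varepsilon_j$, $\varepsilon_{j'}' \le \varepsilon_j'$ pointwise for $j' \le j$. Suppose that for all $j$ and $t \in [0,T]$, $W_j(t) + \lambda \int_0^t \varepsilon_j' W_j \, dt' \le C\Big[\sum_{j' \le j} 2^{(j'-j)s}\Big(\int_0^t W_{j'}\varepsilon_{j'}' dt' + \frac{1}{\lambda}\sup_{[0,t]} W_{j'}\Big) + \sum_{j' \ge j} 2^{-(j'-j)(1-s)} \int_0^t W_{j'} \varepsilon_{j'}' dt'\Big]$, and $\sup_{j, t} W_j(t) < \infty$. Then for $\lambda$ sufficiently large (depending only on $C$ and $s$), $\sup_{j \ge -1, t \in [0,T]} W_j(t) = 0$. -/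

import Mathlib

open MeasureTheory Real FourierTransform Filter Topology
open scoped ENNReal

noncomputable section

abbrev E3 := EuclideanSpace ℝ (Fin 3)

/-- Partial derivative in direction `i`. -/
def pd {F : Type*} [NormedAddCommGroup F] [NormedSpace ℝ F] (i : Fin 3) (f : E3 → F) :
    E3 → F :=
  fun x => fderiv ℝ f x (EuclideanSpace.single i 1)

/-- A (dyadic) Littlewood-Paley decomposition of frequency space on `ℝ³`. -/
structure LPDecomp where
  φ : E3 → ℝ
  χ : E3 → ℝ
  φ_smooth : ContDiff ℝ (⊤ : ℕ∞) φ
  χ_smooth : ContDiff ℝ (⊤ : ℕ∞) χ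
  φ_nonneg : ∀ ξ, 0 ≤ φ ξ
  χ_nonneg : ∀ ξ, 0 ≤ χ ξ
  φ_radial : ∀ ξ η : E3, ‖ξ‖ = ‖η‖ → φ ξ = φ η
  χ_radial : ∀ ξ η : E3, ‖ξ‖ = ‖η‖ → χ ξ = χ η
  φ_supp : ∀ ξ, φ ξ ≠ 0 → 3/4 ≤ ‖ξ‖ ∧ ‖ξ‖ ≤ 8/3
  χ_supp : ∀ ξ, χ ξ ≠ 0 → ‖ξ‖ ≤ 4/3
  partition : ∀ ξ, χ ξ + ∑' j : ℕ, φ ((2:ℝ)^(-(j:ℤ)) • ξ) = 1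

namespace LPDecomp

/-- The symbol of the block `Δ_j`: `χ` for `j = -1`, `φ(2^{-j}·)` for `j ≥ 0`, `0` otherwise. -/
def symbol (D : LPDecomp) (j : ℤ) : E3 → ℝ :=
  if j = -1 then D.χ
  else if 0 ≤ j then fun ξ => D.φ ((2:ℝ)^(-j) • ξ)
  else 0

/-- The convolution kernel of `Δ_j` (the inverse Fourier transform of the symbol;
it is real-valued since the symbol is radial). -/
def kernel (D : LPDecomp) (j : ℤ) : E3 → ℝ :=
  fun y => (𝓕⁻ (fun ξ => (D.symbol j ξ : ℂ)) y).re

/-- The Littlewood-Paley block `Δ_j f`, defined by convolution with the kernel. -/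
def Δ (D : LPDecomp) {F : Type*} [NormedAddCommGroup F] [NormedSpace ℝ F]
    (j : ℤ) (f : E3 → F) : E3 → F :=
  fun x => ∫ y, D.kernel j y • f (x - y)

/-- The low-frequency cut-off `S_j f = ∑_{-1 ≤ k ≤ j-1} Δ_k f`. -/
def S (D : LPDecomp) {F : Type*} [NormedAddCommGroup F] [NormedSpace ℝ F]
    (j : ℤ) (f : E3 → F) : E3 → F :=
  fun x => ∑ k ∈ Finset.Icc (-1 : ℤ) (j - 1), D.Δ k f x

/-- The inhomogeneous Besov norm `‖f‖_{B^s_{p,∞}} = sup_{j ≥ -1} 2^{js} ‖Δ_j f‖_{L^p}`. -/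
def besovNorm (D : LPDecomp) {F : Type*} [NormedAddCommGroup F] [NormedSpace ℝ F]
    (s : ℝ) (p : ℝ≥0∞) (f : E3 → F) : ℝ≥0∞ :=
  ⨆ j : {k : ℤ // -1 ≤ k}, ENNReal.ofReal ((2:ℝ) ^ (((j : ℤ) : ℝ) * s)) *
    eLpNorm (D.Δ (j : ℤ) f) p volume

end LPDecomp

/-- Divergence of a vector field. -/
def divg (u : E3 → E3) : E3 → ℝ := fun x => ∑ i, pd i (fun y => u y i) x

/-- Curl of a vector field on `ℝ³`. -/
def curl (u : E3 → E3) : E3 → E3 := fun x =>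
  (WithLp.equiv 2 (Fin 3 → ℝ)).symm
    ![pd 1 (fun y => u y 2) x - pd 2 (fun y => u y 1) x,
      pd 2 (fun y => u y 0) x - pd 0 (fun y => u y 2) x,
      pd 0 (fun y => u y 1) x - pd 1 (fun y => u y 0) x]

/-- `‖∇v‖_{L²}²`, computed componentwise. -/
def gradSqL2 (v : E3 → E3) : ℝ≥0∞ :=
  ∑ i : Fin 3, ∑ k : Fin 3, (eLpNorm (fun x => pd k (fun y => v y i) x) 2 volume) ^ 2


lemma lg_sum_geom_icc_le (r : ℝ) (h0 : 0 ≤ r) (h1 : r < 1) (j : ℤ) :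
    ∑ j' ∈ Finset.Icc (-1 : ℤ) j, r ^ (j - j').toNat ≤ (1 - r)⁻¹ := by
  have hsum : Summable (fun n : ℕ => r ^ n) := summable_geometric_of_lt_one h0 h1
  calc ∑ j' ∈ Finset.Icc (-1:ℤ) j, r ^ (j - j').toNat
      = ∑ n ∈ Finset.image (fun j' => (j - j').toNat) (Finset.Icc (-1:ℤ) j), r ^ n := by
        rw [Finset.sum_image]
        intro a ha b hb hab
        simp only [Finset.mem_coe, Finset.mem_Icc] at ha hb hab
        omega
    _ ≤ ∑' n : ℕ, r ^ n := Summable.sum_le_tsum _ (fun n _ => pow_nonneg h0 n) hsum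
    _ = (1 - r)⁻¹ := tsum_geometric_of_lt_one h0 h1

lemma lg_rpow_eq_pow (s : ℝ) (n : ℕ) :
    (2:ℝ) ^ (-(n:ℝ) * s) = ((2:ℝ) ^ (-s)) ^ n := by
  rw [← Real.rpow_natCast ((2:ℝ) ^ (-s)) n, ← Real.rpow_mul (by norm_num : (0:ℝ) ≤ 2)]
  ring_nf

def lg_equiv (j : ℤ) : ℕ ≃ {k : ℤ // j ≤ k} where
  toFun n := ⟨j + n, by omega⟩
  invFun k := (k.1 - j).toNat
  left_inv n := by simp
  right_inv k := by
    obtain ⟨k, hk⟩ := k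
    apply Subtype.ext
    simp
    omega

set_option maxHeartbeats 1000000 in
/-- **The losing-derivative Gronwall argument.** If the dyadic quantities `W_j` satisfy the
weighted inequality with parameter `λ`, then for `λ` sufficiently large (depending only on
`C` and `s`) all `W_j` vanish identically on `[0,T]`. -/
theorem losing_gronwall (s C : ℝ) (hs0 : 0 < s) (hs1 : s < 1) (hC : 0 < C) :
    ∃ Λ : ℝ, ∀ lam : ℝ, Λ ≤ lam →
      ∀ (T : ℝ) (W ε ε' : ℤ → ℝ → ℝ), 0 ≤ T →
      (∀ j, ContinuousOn (W j) (Set.Icc 0 T)) →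
      (∀ j t, 0 ≤ W j t) →
      (∀ j, W j 0 = 0) →
      (∀ j t, HasDerivAt (ε j) (ε' j t) t) →
      (∀ j, Continuous (ε' j)) →
      (∀ j t, 0 ≤ ε' j t) →
      (∀ j, ε j 0 = 0) →
      (∀ j' j t, j' ≤ j → ε j' t ≤ ε j t) →
      (∀ j' j t, j' ≤ j → ε' j' t ≤ ε' j t) →
      (∃ M : ℝ, ∀ j, ∀ t ∈ Set.Icc (0:ℝ) T, W j t ≤ M) →
      (∃ M' : ℝ, ∀ j, (∫ t' in (0:ℝ)..T, ε' j t' * W j t') ≤ M') →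
      (∀ j, -1 ≤ j → ∀ t ∈ Set.Icc (0:ℝ) T,
        W j t + lam * ∫ t' in (0:ℝ)..t, ε' j t' * W j t' ≤
          C * ((∑ j' ∈ Finset.Icc (-1 : ℤ) j, (2:ℝ) ^ (((j' - j : ℤ) : ℝ) * s) *
                ((∫ t' in (0:ℝ)..t, ε' j' t' * W j' t') +
                  (1 / lam) * sSup (W j' '' Set.Icc 0 t))) +
            ∑' j' : {k : ℤ // j ≤ k}, (2:ℝ) ^ (-(((j' : ℤ) - j : ℤ) : ℝ) * (1 - s)) *
              ∫ t' in (0:ℝ)..t, ε' (j' : ℤ) t' * W (j' : ℤ) t')) →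
      ∀ j, -1 ≤ j → ∀ t ∈ Set.Icc (0:ℝ) T, W j t = 0 := by
  have hr1pos : (0:ℝ) < (2:ℝ) ^ (-s) := Real.rpow_pos_of_pos (by norm_num) _
  have hr1lt : (2:ℝ) ^ (-s) < 1 :=
    Real.rpow_lt_one_of_one_lt_of_neg (by norm_num) (by linarith)
  have hr2pos : (0:ℝ) < (2:ℝ) ^ (-(1-s)) := Real.rpow_pos_of_pos (by norm_num) _
  have hr2lt : (2:ℝ) ^ (-(1-s)) < 1 :=
    Real.rpow_lt_one_of_one_lt_of_neg (by norm_num) (by linarith)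
  set r1 : ℝ := (2:ℝ) ^ (-s) with hr1def
  set r2 : ℝ := (2:ℝ) ^ (-(1-s)) with hr2def
  set c1 : ℝ := (1 - r1)⁻¹ with hc1def
  set c2 : ℝ := (1 - r2)⁻¹ with hc2def
  have hc1pos : 0 < c1 := inv_pos.mpr (by linarith)
  have hc2pos : 0 < c2 := inv_pos.mpr (by linarith)
  set K : ℝ := C * (c1 + c2) with hKdef
  have hKpos : 0 < K := mul_pos hC (by linarith)
  refine ⟨4 * K + 1, ?_⟩
  intro lam hlam T W ε ε' hT hWc hWnn hW0 hεd hε'c hε'nn hε0 hεmono hε'mono hMex hM'ex hineq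
  obtain ⟨M, hM⟩ := hMex
  obtain ⟨M', hM'⟩ := hM'ex
  have hlam0 : 0 < lam := by linarith
  -- integrability
  have hInt : ∀ (j : ℤ) (a b : ℝ), a ∈ Set.Icc 0 T → b ∈ Set.Icc 0 T →
      IntervalIntegrable (fun t' => ε' j t' * W j t') volume a b := by
    intro j a b ha hb
    apply ContinuousOn.intervalIntegrable
    exact ((hε'c j).continuousOn.mul ((hWc j).mono (Set.uIcc_subset_Icc ha hb)))
  have hInn : ∀ (j : ℤ) (t : ℝ), 0 ≤ t → 0 ≤ ∫ t' in (0:ℝ)..t, ε' j t' * W j t' :=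
    fun j t ht => intervalIntegral.integral_nonneg ht
      (fun u _ => mul_nonneg (hε'nn j u) (hWnn j u))
  have hImono : ∀ (j : ℤ), ∀ t ∈ Set.Icc (0:ℝ) T,
      (∫ t' in (0:ℝ)..t, ε' j t' * W j t') ≤ ∫ t' in (0:ℝ)..T, ε' j t' * W j t' := by
    intro j t ht
    have h1 := hInt j 0 t ⟨le_refl _, hT⟩ ht
    have h2 := hInt j t T ht ⟨hT, le_refl _⟩
    have hsplit := intervalIntegral.integral_add_adjacent_intervals h1 h2
    have hnn : 0 ≤ ∫ t' in t..T, ε' j t' * W j t' :=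
      intervalIntegral.integral_nonneg ht.2
        (fun u _ => mul_nonneg (hε'nn j u) (hWnn j u))
    linarith
  -- suprema
  set SA : Set ℝ := {x | ∃ j : ℤ, -1 ≤ j ∧ ∃ t ∈ Set.Icc (0:ℝ) T, W j t = x} with hSAdef
  set A : ℝ := sSup SA with hAdef
  have hSAne : SA.Nonempty := ⟨W (-1) 0, -1, le_refl _, 0, ⟨le_refl _, hT⟩, rfl⟩
  have hSAbdd : BddAbove SA := ⟨M, by rintro x ⟨j, hj, t, ht, rfl⟩; exact hM j t ht⟩
  have hWleA : ∀ j : ℤ, -1 ≤ j → ∀ t ∈ Set.Icc (0:ℝ) T, W j t ≤ A :=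
    fun j hj t ht => le_csSup hSAbdd ⟨j, hj, t, ht, rfl⟩
  have hA0 : 0 ≤ A := (hWnn (-1) 0).trans (hWleA (-1) le_rfl 0 ⟨le_rfl, hT⟩)
  set SB : Set ℝ := {x | ∃ j : ℤ, -1 ≤ j ∧ (∫ t' in (0:ℝ)..T, ε' j t' * W j t') = x}
    with hSBdef
  set B : ℝ := sSup SB with hBdef
  have hSBne : SB.Nonempty := ⟨_, -1, le_refl _, rfl⟩
  have hSBbdd : BddAbove SB := ⟨M', by rintro x ⟨j, hj, rfl⟩; exact hM' j⟩
  have hIleB : ∀ j : ℤ, -1 ≤ j → (∫ t' in (0:ℝ)..T, ε' j t' * W j t') ≤ B :=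
    fun j hj => le_csSup hSBbdd ⟨j, hj, rfl⟩
  have hB0 : 0 ≤ B := (hInn (-1) T hT).trans (hIleB (-1) le_rfl)
  have hsupleA : ∀ j' : ℤ, -1 ≤ j' → ∀ t ∈ Set.Icc (0:ℝ) T,
      sSup (W j' '' Set.Icc 0 t) ≤ A := by
    intro j' hj' t ht
    apply csSup_le ((Set.nonempty_Icc.mpr ht.1).image _)
    rintro x ⟨u, hu, rfl⟩
    exact hWleA j' hj' u ⟨hu.1, hu.2.trans ht.2⟩
  -- key bound on the right-hand side
  have hKey : ∀ j : ℤ, -1 ≤ j → ∀ t ∈ Set.Icc (0:ℝ) T,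
      C * ((∑ j' ∈ Finset.Icc (-1 : ℤ) j, (2:ℝ) ^ (((j' - j : ℤ) : ℝ) * s) *
                ((∫ t' in (0:ℝ)..t, ε' j' t' * W j' t') +
                  (1 / lam) * sSup (W j' '' Set.Icc 0 t))) +
            ∑' j' : {k : ℤ // j ≤ k}, (2:ℝ) ^ (-(((j' : ℤ) - j : ℤ) : ℝ) * (1 - s)) *
              ∫ t' in (0:ℝ)..t, ε' (j' : ℤ) t' * W (j' : ℤ) t')
        ≤ K * (B + A / lam) := by
    intro j hj t ht
    have hBA : 0 ≤ B + A / lam := by positivity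
    have hsum1 : (∑ j' ∈ Finset.Icc (-1 : ℤ) j, (2:ℝ) ^ (((j' - j : ℤ) : ℝ) * s) *
                ((∫ t' in (0:ℝ)..t, ε' j' t' * W j' t') +
                  (1 / lam) * sSup (W j' '' Set.Icc 0 t)))
        ≤ c1 * (B + A / lam) := by
      calc (∑ j' ∈ Finset.Icc (-1 : ℤ) j, (2:ℝ) ^ (((j' - j : ℤ) : ℝ) * s) *
                ((∫ t' in (0:ℝ)..t, ε' j' t' * W j' t') +
                  (1 / lam) * sSup (W j' '' Set.Icc 0 t)))
          ≤ ∑ j' ∈ Finset.Icc (-1:ℤ) j, r1 ^ (j - j').toNat * (B + A / lam) := by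
            apply Finset.sum_le_sum
            intro j' hj'mem
            rw [Finset.mem_Icc] at hj'mem
            have hexp : (2:ℝ) ^ (((j' - j : ℤ) : ℝ) * s) = r1 ^ (j - j').toNat := by
              have h0 : ((j - j').toNat : ℤ) = j - j' := Int.toNat_of_nonneg (by omega)
              have h1 : ((j' - j : ℤ) : ℝ) = -(((j - j').toNat : ℕ) : ℝ) := by
                rw [show (((j - j').toNat : ℕ) : ℝ) = (((j - j').toNat : ℤ) : ℝ) by push_cast; ring,
                  h0]
                push_cast; ring
              rw [h1, lg_rpow_eq_pow, hr1def]
            rw [hexp]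
            refine mul_le_mul_of_nonneg_left ?_ (pow_nonneg hr1pos.le _)
            refine add_le_add ((hImono j' t ht).trans (hIleB j' hj'mem.1)) ?_
            calc (1 / lam) * sSup (W j' '' Set.Icc 0 t)
                ≤ (1 / lam) * A :=
                  mul_le_mul_of_nonneg_left (hsupleA j' hj'mem.1 t ht) (by positivity)
              _ = A / lam := one_div_mul_eq_div _ _
        _ = (∑ j' ∈ Finset.Icc (-1:ℤ) j, r1 ^ (j - j').toNat) * (B + A / lam) :=
            (Finset.sum_mul _ _ _).symm
        _ ≤ c1 * (B + A / lam) :=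
            mul_le_mul_of_nonneg_right (lg_sum_geom_icc_le r1 hr1pos.le hr1lt j) hBA
    have hsum2 : (∑' j' : {k : ℤ // j ≤ k}, (2:ℝ) ^ (-(((j' : ℤ) - j : ℤ) : ℝ) * (1 - s)) *
              ∫ t' in (0:ℝ)..t, ε' (j' : ℤ) t' * W (j' : ℤ) t') ≤ c2 * B := by
      set f : {k : ℤ // j ≤ k} → ℝ := fun j' =>
        (2:ℝ) ^ (-(((j' : ℤ) - j : ℤ) : ℝ) * (1 - s)) *
          ∫ t' in (0:ℝ)..t, ε' (j' : ℤ) t' * W (j' : ℤ) t' with hfdef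
      set g : {k : ℤ // j ≤ k} → ℝ := fun j' => r2 ^ (((j' : ℤ) - j).toNat) * B with hgdef
      have hfg : ∀ k, f k ≤ g k := by
        intro k
        have h0 : ((((k : ℤ) - j).toNat : ℕ) : ℤ) = (k : ℤ) - j :=
          Int.toNat_of_nonneg (sub_nonneg.mpr k.2)
        have hexp : (2:ℝ) ^ (-((((k : ℤ) - j : ℤ)) : ℝ) * (1 - s))
            = r2 ^ (((k : ℤ) - j).toNat) := by
          have h1 : ((((k : ℤ) - j : ℤ)) : ℝ) = ((((k : ℤ) - j).toNat : ℕ) : ℝ) := by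
            rw [show ((((k:ℤ) - j).toNat : ℕ) : ℝ) = ((((k:ℤ) - j).toNat : ℤ) : ℝ) by push_cast; ring,
              h0]
          rw [h1, lg_rpow_eq_pow (1-s), hr2def]
        simp only [hfdef, hgdef]
        rw [hexp]
        refine mul_le_mul_of_nonneg_left ?_ (pow_nonneg hr2pos.le _)
        exact (hImono (k : ℤ) t ht).trans (hIleB (k : ℤ) (le_trans hj k.2))
      have hfnn : ∀ k, 0 ≤ f k := by
        intro k
        exact mul_nonneg (Real.rpow_nonneg (by norm_num) _) (hInn _ t ht.1)
      have hge : (fun n : ℕ => g (lg_equiv j n)) = fun n : ℕ => r2 ^ n * B := by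
        funext n
        simp only [hgdef, lg_equiv, Equiv.coe_fn_mk]
        congr 2
        omega
      have hgsummable : Summable g := by
        rw [← Equiv.summable_iff (lg_equiv j)]
        show Summable (fun n : ℕ => g (lg_equiv j n))
        rw [hge]
        exact (summable_geometric_of_lt_one hr2pos.le hr2lt).mul_right B
      have htsumg : ∑' k, g k = c2 * B := by
        rw [← Equiv.tsum_eq (lg_equiv j) g]
        calc ∑' n : ℕ, g (lg_equiv j n) = ∑' n : ℕ, r2 ^ n * B := by rw [hge]
          _ = (∑' n : ℕ, r2 ^ n) * B := tsum_mul_right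
          _ = c2 * B := by rw [tsum_geometric_of_lt_one hr2pos.le hr2lt]
      by_cases hfs : Summable f
      · calc ∑' k, f k ≤ ∑' k, g k := Summable.tsum_le_tsum hfg hfs hgsummable
          _ = c2 * B := htsumg
      · rw [tsum_eq_zero_of_not_summable hfs]
        positivity
    have hcomb : (∑ j' ∈ Finset.Icc (-1 : ℤ) j, (2:ℝ) ^ (((j' - j : ℤ) : ℝ) * s) *
                ((∫ t' in (0:ℝ)..t, ε' j' t' * W j' t') +
                  (1 / lam) * sSup (W j' '' Set.Icc 0 t))) +
          (∑' j' : {k : ℤ // j ≤ k}, (2:ℝ) ^ (-(((j' : ℤ) - j : ℤ) : ℝ) * (1 - s)) *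
              ∫ t' in (0:ℝ)..t, ε' (j' : ℤ) t' * W (j' : ℤ) t')
          ≤ (c1 + c2) * (B + A / lam) := by
      have h2 : c2 * B ≤ c2 * (B + A / lam) := by
        apply mul_le_mul_of_nonneg_left _ hc2pos.le
        have : 0 ≤ A / lam := by positivity
        linarith
      have := add_le_add hsum1 (hsum2.trans h2)
      linarith [this]
    refine le_trans (mul_le_mul_of_nonneg_left hcomb hC.le) ?_
    exact le_of_eq (by rw [hKdef]; ring)
  -- the two absorbed inequalities
  have hAle : A ≤ K * (B + A / lam) := by
    apply csSup_le hSAne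
    rintro x ⟨j, hj, t, ht, rfl⟩
    have h := hineq j hj t ht
    have h2 := hKey j hj t ht
    have h3 := hInn j t ht.1
    nlinarith [mul_nonneg hlam0.le h3]
  have hBle : lam * B ≤ K * (B + A / lam) := by
    rw [show lam * B = B * lam from mul_comm _ _, ← le_div_iff₀ hlam0]
    apply csSup_le hSBne
    rintro x ⟨j, hj, rfl⟩
    rw [le_div_iff₀ hlam0]
    have h := hineq j hj T ⟨hT, le_rfl⟩
    have h2 := hKey j hj T ⟨hT, le_rfl⟩
    have h3 := hWnn j T
    nlinarith
  -- conclude A ≤ 0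
  have hALE0 : A ≤ 0 := by
    have e1 : A * lam ≤ K * B * lam + K * A := by
      have h := mul_le_mul_of_nonneg_right hAle hlam0.le
      have heq : (K * (B + A / lam)) * lam = K * B * lam + K * A := by
        field_simp
      linarith [heq ▸ h]
    have e2 : lam * B * lam ≤ K * B * lam + K * A := by
      have h := mul_le_mul_of_nonneg_right hBle hlam0.le
      have heq : (K * (B + A / lam)) * lam = K * B * lam + K * A := by
        field_simp
      linarith [heq ▸ h]
    have hLK : 0 < lam - K := by linarith
    have f1 : A * (lam - K) ≤ K * (B * lam) := by linarith [e1]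
    have f2 : B * lam * (lam - K) ≤ K * A := by linarith [e2]
    have g1 : A * (lam - K) * (lam - K) ≤ K * (B * lam) * (lam - K) :=
      mul_le_mul_of_nonneg_right f1 hLK.le
    have g2 : K * (B * lam * (lam - K)) ≤ K * (K * A) :=
      mul_le_mul_of_nonneg_left f2 hKpos.le
    have hmain : A * ((lam - K)^2 - K^2) ≤ 0 := by nlinarith [g1, g2]
    have hpos : 0 < (lam - K)^2 - K^2 := by nlinarith [mul_pos hlam0 (show (0:ℝ) < lam - 2*K by linarith)]
    by_contra hc
    push_neg at hc
    linarith [mul_pos hc hpos, hmain]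
  intro j hj t ht
  exact le_antisymm ((hWleA j hj t ht).trans hALE0) (hWnn j t)


end
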